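/- Let n ≥ 2, let Γ ⊆ ℝ^n be an S-cone (i.e. there is a finite composition Φ of order-preserving monomial blowing-ups with Φ(Γ) ⊆ ℝ_{≥0}^n), and let d be a positive integer. Then every subset of Γ ∩ (1/d)ℤ^n is well-ordered for the lexicographic order; consequently, every formal sum f = Σ f_v x^v whose exponents v all lie in Γ ∩ (1/d)ℤ^n is a Hahn series, i.e. an element of K. -/

import Mathlib

noncomputable section

/-- The monomial blowing-up `φ_{ij}` of `ℝ^n` (for distinct `i`, `j`): the `j`-th
coordinate becomes `a i + a j`, the other coordinates are unchanged. -/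
def blowUp (n : ℕ) (i j : Fin n) : (Fin n → ℝ) → (Fin n → ℝ) :=
  fun a l => if l = j then a i + a j else a l

/-- The monomial blowing-down `φ_{ij}⁻¹` of `ℝ^n`, the inverse of `blowUp n i j`. -/
def blowDown (n : ℕ) (i j : Fin n) : (Fin n → ℝ) → (Fin n → ℝ) :=
  fun a l => if l = j then a l - a i else a l

/-- `Φ` is a finite composition of order-preserving monomial blowing-ups `φ_{ij}`, `i < j`. -/
def IsBlowUpComp (n : ℕ) (Φ : (Fin n → ℝ) → (Fin n → ℝ)) : Prop :=
  ∃ L : List ((Fin n → ℝ) → (Fin n → ℝ)),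
    (∀ g ∈ L, ∃ i j : Fin n, i < j ∧ g = blowUp n i j) ∧ Φ = L.foldr (· ∘ ·) id

/-- `Φ` is a finite composition of order-preserving monomial blowing-downs `φ_{ij}⁻¹`, `i < j`. -/
def IsBlowDownComp (n : ℕ) (Φ : (Fin n → ℝ) → (Fin n → ℝ)) : Prop :=
  ∃ L : List ((Fin n → ℝ) → (Fin n → ℝ)),
    (∀ g ∈ L, ∃ i j : Fin n, i < j ∧ g = blowDown n i j) ∧ Φ = L.foldr (· ∘ ·) id

/-! A composition `Φ` of order-preserving blowing-ups is strictly increasing for the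
lexicographic order and preserves the lattice `(1/d)ℤ^n`. For an `S`-cone it therefore embeds
`Γ ∩ (1/d)ℤ^n` order-preservingly into the nonnegative part of `(1/d)ℤ^n`, a copy of `ℕ^n`
with its lexicographic order, which is a well-order. Rational exponents embed into `ℝ^n`
preserving the lexicographic order, so the support of `f` is well-ordered too. -/

theorem Set.IsWF.of_image_of_strictMono {α β : Type*} [Preorder α] [Preorder β] {f : α → β}
    (hf : StrictMono f) {s : Set α} (h : (f '' s).IsWF) : s.IsWF :=
  (Set.wellFoundedOn_image.1 h).mono' fun _ _ _ _ hab => hf hab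

theorem Pi.Lex.strictMono_comp_left {ι α β : Type*} [LinearOrder ι] [PartialOrder α]
    [PartialOrder β] {f : α → β} (hf : StrictMono f) :
    StrictMono fun v : Lex (ι → α) => toLex (f ∘ ofLex v) :=
  fun _ _ ⟨l, hl, hlt⟩ => ⟨l, fun m hm => congrArg f (hl m hm), hf hlt⟩

def scaledLattice (n d : ℕ) : Set (Fin n → ℝ) := {a | ∀ l, ∃ z : ℤ, a l = z / d}

theorem IsBlowUpComp.induction {n : ℕ} {P : ((Fin n → ℝ) → (Fin n → ℝ)) → Prop} (hid : P id)
    (hcomp : ∀ f g, P f → P g → P (f ∘ g)) (hblowUp : ∀ i j, i < j → P (blowUp n i j))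
    {Φ : (Fin n → ℝ) → (Fin n → ℝ)} (hΦ : IsBlowUpComp n Φ) : P Φ := by
  obtain ⟨L, hL, rfl⟩ := hΦ
  induction L with
  | nil => exact hid
  | cons g L ih =>
    obtain ⟨i, j, hij, rfl⟩ := hL g List.mem_cons_self
    exact hcomp (blowUp n i j) _ (hblowUp i j hij)
      (ih fun g hg => hL g (List.mem_cons_of_mem _ hg))

-- Only coordinate `j` moves, by `a i` with `i < j`: the first coordinate where two vectors
-- differ is the same before and after, and so is the sign of the difference there.
theorem blowUp_strictMono {n : ℕ} {i j : Fin n} (hij : i < j) :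
    StrictMono (toLex ∘ blowUp n i j ∘ ofLex) := by
  rintro a b ⟨l, hl, hlt⟩
  have hl' : ∀ m < l, ofLex a m = ofLex b m := hl
  have hlt' : ofLex a l < ofLex b l := hlt
  refine ⟨l, fun m hm => ?_, ?_⟩
  · show blowUp n i j (ofLex a) m = blowUp n i j (ofLex b) m
    simp only [blowUp]
    split_ifs with hmj
    · subst hmj; rw [hl' i (hij.trans hm), hl' m hm]
    · exact hl' m hm
  · show blowUp n i j (ofLex a) l < blowUp n i j (ofLex b) l
    simp only [blowUp]
    split_ifs with hlj
    · subst hlj; linarith [hl' i hij]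
    · exact hlt'

theorem blowUp_mapsTo_scaledLattice {n : ℕ} (i j : Fin n) (d : ℕ) :
    Set.MapsTo (blowUp n i j) (scaledLattice n d) (scaledLattice n d) := by
  intro a ha l
  by_cases hlj : l = j
  · obtain ⟨zi, hzi⟩ := ha i
    obtain ⟨zj, hzj⟩ := ha j
    exact ⟨zi + zj, by simp [blowUp, hlj, hzi, hzj, add_div]⟩
  · simpa [blowUp, hlj] using ha l

theorem IsBlowUpComp.strictMono {n : ℕ} {Φ : (Fin n → ℝ) → (Fin n → ℝ)}
    (hΦ : IsBlowUpComp n Φ) : StrictMono (toLex ∘ Φ ∘ ofLex) :=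
  hΦ.induction (P := fun Φ => StrictMono (toLex ∘ Φ ∘ ofLex)) strictMono_id
    (fun _ _ hf hg => hf.comp hg) fun _ _ => blowUp_strictMono

theorem IsBlowUpComp.mapsTo_scaledLattice {n : ℕ} {Φ : (Fin n → ℝ) → (Fin n → ℝ)}
    (hΦ : IsBlowUpComp n Φ) (d : ℕ) : Set.MapsTo Φ (scaledLattice n d) (scaledLattice n d) :=
  hΦ.induction (P := fun Φ => Set.MapsTo Φ (scaledLattice n d) (scaledLattice n d))
    (Set.mapsTo_id _) (fun _ _ hf hg => hf.comp hg)
    fun i j _ => blowUp_mapsTo_scaledLattice i j d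

theorem intCast_div_eq_toNat_div {z : ℤ} {d : ℕ} (h : 0 ≤ (z : ℝ) / d) :
    (z : ℝ) / d = (z.toNat : ℝ) / d := by
  rcases le_or_gt 0 z with hz | hz
  · congr 1; exact_mod_cast (Int.toNat_of_nonneg hz).symm
  · have hnonpos : (z : ℝ) / d ≤ 0 :=
      div_nonpos_of_nonpos_of_nonneg (by exact_mod_cast hz.le) d.cast_nonneg
    rw [Int.toNat_of_nonpos hz.le]
    simp [le_antisymm hnonpos h]

theorem isWF_nonneg_scaledLattice (n : ℕ) {d : ℕ} (hd : 0 < d) :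
    (ofLex ⁻¹' (Set.Ici 0 ∩ scaledLattice n d) : Set (Lex (Fin n → ℝ))).IsWF := by
  have hscale : StrictMono fun m : ℕ => (m : ℝ) / d := fun _ _ h =>
    (div_lt_div_iff_of_pos_right (by positivity)).2 (by exact_mod_cast h)
  refine ((Set.IsWF.of_wellFoundedLT Set.univ).isPWO.image_of_monotone
    (Pi.Lex.strictMono_comp_left (ι := Fin n) hscale).monotone).isWF.mono ?_
  rintro w ⟨hw0, hw⟩
  choose z hz using hw
  refine ⟨toLex fun l => (z l).toNat, trivial, funext fun l => ?_⟩
  have hzl : 0 ≤ (z l : ℝ) / d := hz l ▸ hw0 l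
  exact (intCast_div_eq_toNat_div hzl).symm.trans (hz l).symm

def IsSCone (n : ℕ) (Γ : Set (Fin n → ℝ)) : Prop :=
  ∃ Φ : (Fin n → ℝ) → (Fin n → ℝ), IsBlowUpComp n Φ ∧ ∀ w ∈ Φ '' Γ, ∀ l : Fin n, 0 ≤ w l

theorem IsSCone.isWF_of_subset_inter_scaledLattice {n d : ℕ} {Γ : Set (Fin n → ℝ)}
    (hΓ : IsSCone n Γ) (hd : 0 < d) {S : Set (Lex (Fin n → ℝ))}
    (hS : ∀ v ∈ S, ofLex v ∈ Γ ∩ scaledLattice n d) : S.IsWF := by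
  obtain ⟨Φ, hΦ, hΦΓ⟩ := hΓ
  refine Set.IsWF.of_image_of_strictMono hΦ.strictMono
    ((isWF_nonneg_scaledLattice n hd).mono ?_)
  rintro _ ⟨v, hv, rfl⟩
  exact ⟨hΦΓ _ ⟨_, (hS v hv).1, rfl⟩, hΦ.mapsTo_scaledLattice d (hS v hv).2⟩

theorem sCone_lattice_wellOrdered_general (k : Type*) [Field k] (n : ℕ)
    (Γ : Set (Fin n → ℝ))
    (hΓ : ∃ Φ : (Fin n → ℝ) → (Fin n → ℝ), IsBlowUpComp n Φ ∧
      ∀ w ∈ Φ '' Γ, ∀ l : Fin n, 0 ≤ w l)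
    (d : ℕ) (hd : 0 < d) :
    (∀ S : Set (Lex (Fin n → ℝ)),
        (∀ v ∈ S, ofLex v ∈ Γ ∧ ∀ l : Fin n, ∃ a : ℤ, ofLex v l = (a : ℝ) / (d : ℝ)) →
        S.IsWF) ∧
    (∀ g : Lex (Fin n → ℚ) → k,
        (∀ v : Lex (Fin n → ℚ), g v ≠ 0 →
          ((fun l => ((ofLex v l : ℚ) : ℝ)) ∈ Γ ∧
            ∀ l : Fin n, ∃ a : ℤ, ofLex v l = (a : ℚ) / (d : ℚ))) →
        ∃ f : HahnSeries (Lex (Fin n → ℚ)) k, ∀ v, f.coeff v = g v) := by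
  have hwf : ∀ S : Set (Lex (Fin n → ℝ)),
      (∀ v ∈ S, ofLex v ∈ Γ ∩ scaledLattice n d) → S.IsWF :=
    fun _ => IsSCone.isWF_of_subset_inter_scaledLattice hΓ hd
  refine ⟨hwf, fun g hg => ?_⟩
  have hcast : StrictMono fun v : Lex (Fin n → ℚ) => toLex (((↑) : ℚ → ℝ) ∘ ofLex v) :=
    Pi.Lex.strictMono_comp_left Rat.cast_strictMono
  have hsupp : (Function.support g).IsWF := by
    refine Set.IsWF.of_image_of_strictMono hcast (hwf _ ?_)
    rintro _ ⟨v, hv, rfl⟩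
    refine ⟨(hg v hv).1, fun l => ?_⟩
    obtain ⟨a, ha⟩ := (hg v hv).2 l
    exact ⟨a, by simp [ha]⟩
  exact ⟨⟨g, hsupp.isPWO⟩, fun _ => rfl⟩

/-- **(Corollary `1808052`).**  Let `n ≥ 2`, let `Γ ⊆ ℝ^n` be an `S`-cone (some finite
composition of order-preserving monomial blowing-ups takes it into `ℝ_{≥0}^n`) and let
`d` be a positive integer.  Then every subset of `Γ ∩ (1/d)ℤ^n` is well-ordered for the
lexicographic order; consequently, every formal sum `f = Σ f_v x^v` over a field `k`
whose exponents `v` all lie in `Γ ∩ (1/d)ℤ^n` is a Hahn series, i.e. an element of `K`. -/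
theorem sCone_lattice_wellOrdered (k : Type*) [Field k] (n : ℕ) (hn : 2 ≤ n)
    (Γ : Set (Fin n → ℝ))
    (hΓ : ∃ Φ : (Fin n → ℝ) → (Fin n → ℝ), IsBlowUpComp n Φ ∧
      ∀ w ∈ Φ '' Γ, ∀ l : Fin n, 0 ≤ w l)
    (d : ℕ) (hd : 0 < d) :
    (∀ S : Set (Lex (Fin n → ℝ)),
        (∀ v ∈ S, ofLex v ∈ Γ ∧ ∀ l : Fin n, ∃ a : ℤ, ofLex v l = (a : ℝ) / (d : ℝ)) →
        S.IsWF) ∧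
    (∀ g : Lex (Fin n → ℚ) → k,
        (∀ v : Lex (Fin n → ℚ), g v ≠ 0 →
          ((fun l => ((ofLex v l : ℚ) : ℝ)) ∈ Γ ∧
            ∀ l : Fin n, ∃ a : ℤ, ofLex v l = (a : ℚ) / (d : ℚ))) →
        ∃ f : HahnSeries (Lex (Fin n → ℚ)) k, ∀ v, f.coeff v = g v) :=
  sCone_lattice_wellOrdered_general k n Γ hΓ d hd
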